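/- arXiv:1205.5574 — 4 statements merged into one kernel-verified Lean document; each statement's English description precedes it below -/
import Mathlib

section
/- Let G be a group, and let H be a self-rooted subgroup of G (root_G(H) = H) such that H = N_G(H). If g ∈ Comm_G(H) and the subgroup generated by H and gHg⁻¹ contains H ∩ gHg⁻¹ with finite index, with ⟨H, gHg⁻¹⟩ = H forced by self-rootedness, then g ∈ N_G(H); hence Comm_G(H) = N_G(H). -/
/-!
A finitely generated self-rooted subgroup `H` can only be commensurable with a finitely generated
subgroup `K` it already contains: by the Greenberg–Stallings property `H` has finite index in
`H ⊔ K`, so `H ⊔ K = H`. Applied to `K = gHg⁻¹` and `K = g⁻¹Hg` for `g` in the commensurator, this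
gives `gHg⁻¹ = H`.
-/

open Pointwise

namespace Subgroup

variable {G : Type*} [Group G]

theorem FG.map {G' : Type*} [Group G'] {H : Subgroup G} (hH : H.FG) (f : G →* G') :
    (H.map f).FG := by
  classical
  obtain ⟨S, rfl⟩ := hH
  exact ⟨S.image f, by rw [Finset.coe_image, MonoidHom.map_closure]⟩

theorem FG.smul {α : Type*} [Monoid α] [MulDistribMulAction α G] {H : Subgroup G} (hH : H.FG)
    (a : α) : (a • H).FG :=
  hH.map _

variable (G) in
def HasGreenbergStallingsProperty : Prop :=
  ∀ A B : Subgroup G, A.FG → B.FG → (A ⊓ B).relIndex A ≠ 0 →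
    (A ⊓ B).relIndex B ≠ 0 → (A ⊓ B).relIndex (A ⊔ B) ≠ 0

def IsSelfRooted (H : Subgroup G) : Prop :=
  ∀ K : Subgroup G, H ≤ K → H.relIndex K ≠ 0 → K ≤ H

theorem HasGreenbergStallingsProperty.relIndex_sup_ne_zero (hGS : HasGreenbergStallingsProperty G)
    {A B : Subgroup G} (hA : A.FG) (hB : B.FG) (hAB : A.Commensurable B) :
    A.relIndex (A ⊔ B) ≠ 0 := by
  have hinf := hGS A B hA hB (by rw [inf_relIndex_left]; exact hAB.2)
    (by rw [inf_relIndex_right]; exact hAB.1)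
  exact fun h ↦ hinf (relIndex_eq_zero_of_le_left inf_le_left h)

theorem IsSelfRooted.le_of_commensurable (hGS : HasGreenbergStallingsProperty G)
    {H K : Subgroup G} (hroot : H.IsSelfRooted) (hH : H.FG) (hK : K.FG)
    (hHK : H.Commensurable K) : K ≤ H :=
  le_sup_right.trans (hroot _ le_sup_left (hGS.relIndex_sup_ne_zero hH hK hHK))

theorem IsSelfRooted.commensurator_le_normalizer (hGS : HasGreenbergStallingsProperty G)
    {H : Subgroup G} (hroot : H.IsSelfRooted) (hH : H.FG) :
    Commensurable.commensurator H ≤ normalizer (H : Set G) := by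
  intro g hg
  have conj_le (c : ConjAct G) (hc : (c • H).Commensurable H) : c • H ≤ H :=
    hroot.le_of_commensurable hGS hH (hH.smul c) hc.symm
  have hle : ConjAct.toConjAct g • H ≤ H := conj_le _ hg
  have hge : H ≤ ConjAct.toConjAct g • H := by
    rw [subset_pointwise_smul_iff, ← map_inv]
    exact conj_le _ (inv_mem hg)
  exact conjAct_pointwise_smul_iff.mp (hle.antisymm hge)

theorem normalizer_le_commensurator (H : Subgroup G) :
    normalizer (H : Set G) ≤ Commensurable.commensurator H := fun g hg ↦ by
  rw [Commensurable.commensurator_mem_iff, conjAct_pointwise_smul_eq_self hg]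

end Subgroup

theorem commensurator_eq_normalizer_of_selfRooted_general {G : Type*} [Group G]
    (hGS : ∀ A B : Subgroup G, A.FG → B.FG → (A ⊓ B).relIndex A ≠ 0 →
      (A ⊓ B).relIndex B ≠ 0 → (A ⊓ B).relIndex (A ⊔ B) ≠ 0)
    (H : Subgroup G) (hfg : H.FG)
    (hroot : ∀ K : Subgroup G, H ≤ K → H.relIndex K ≠ 0 → K ≤ H) :
    Subgroup.Commensurable.commensurator H = Subgroup.normalizer (H : Set G) :=
  (Subgroup.IsSelfRooted.commensurator_le_normalizer hGS hroot hfg).antisymm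
    (Subgroup.normalizer_le_commensurator H)

/-- If `G` satisfies the Greenberg–Stallings property, `H` is a finitely generated
self-rooted subgroup with `H = N_G(H)`, then `Comm_G(H) = N_G(H)`. -/
theorem commensurator_eq_normalizer_of_selfRooted {G : Type*} [Group G]
    (hGS : ∀ A B : Subgroup G, A.FG → B.FG → (A ⊓ B).relIndex A ≠ 0 →
      (A ⊓ B).relIndex B ≠ 0 → (A ⊓ B).relIndex (A ⊔ B) ≠ 0)
    (H : Subgroup G) (hfg : H.FG)
    (hroot : ∀ K : Subgroup G, H ≤ K → H.relIndex K ≠ 0 → K ≤ H)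
    (hnorm : Subgroup.normalizer (H : Set G) = H) :
    Subgroup.Commensurable.commensurator H = Subgroup.normalizer (H : Set G) :=
  commensurator_eq_normalizer_of_selfRooted_general hGS H hfg hroot
end

section
/- Let G = HNN(H, A, t) be a pro-p HNN-extension of a finitely generated pro-p group H over a procyclic subgroup A, with associated monomorphism f: A → H. Then d(G) ≥ d(H). -/
/-- A pro-`p` group: a compact, totally disconnected topological group in which
every open normal subgroup has `p`-power index. -/
def IsProP (p : ℕ) (G : Type*) [Group G] [TopologicalSpace G] [IsTopologicalGroup G] : Prop :=
  CompactSpace G ∧ TotallyDisconnectedSpace G ∧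
    ∀ U : Subgroup G, U.Normal → IsOpen (U : Set G) → ∃ n : ℕ, U.index = p ^ n

/-- `dmin G` is the minimal number of topological generators of `G`. -/
noncomputable def dmin (G : Type*) [Group G] [TopologicalSpace G] [IsTopologicalGroup G] : ℕ :=
  sInf {n : ℕ | ∃ S : Finset G, S.card = n ∧
    (Subgroup.closure (S : Set G)).topologicalClosure = ⊤}

/-- `G` is topologically finitely generated. -/
def TopFG (G : Type*) [Group G] [TopologicalSpace G] [IsTopologicalGroup G] : Prop :=
  ∃ S : Finset G, (Subgroup.closure (S : Set G)).topologicalClosure = ⊤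

/-- `G` is procyclic: topologically generated by one element. -/
def Procyclic (G : Type*) [Group G] [TopologicalSpace G] [IsTopologicalGroup G] : Prop :=
  ∃ c : G, (Subgroup.closure ({c} : Set G)).topologicalClosure = ⊤

/-!
Write `V(G) = H¹(G, 𝔽_p)` for the space of continuous homomorphisms `G → ℤ/p`. For a
topologically finitely generated `G` one has `dim V(G) ≤ d(G)`, since a character is determined by
its values on generators; for pro-`p` `H` equality holds by the Frattini argument, because a proper
closed subgroup lies in an open normal subgroup of index `p`.

By the universal property, a character of `H` extends to `G`, with any value at `t`, as soon as it
agrees with its pullback along `f`; as `A` is procyclic, this is the single linear condition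
`φ (f a) = φ a`. So restriction `V(G) → V(H)` has image of codimension at most one and a nonzero
kernel, which gives `d(H) = dim V(H) ≤ dim V(G) ≤ d(G)`.
-/

open Module

theorem IsPGroup.exists_le_normal_index_eq_of_ne_top {p : ℕ} [Fact p.Prime] {Q : Type*} [Group Q]
    [Finite Q] (hQ : IsPGroup p Q) {N : Subgroup Q} (hN : N ≠ ⊤) :
    ∃ K : Subgroup Q, K.Normal ∧ N ≤ K ∧ K.index = p := by
  have hp : p.Prime := Fact.out
  obtain ⟨n, hn⟩ := hQ.exists_card_eq
  obtain ⟨m, hm⟩ := (hQ.to_subgroup N).exists_card_eq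
  have hmn : m < n := by
    have hlt : Nat.card N < Nat.card Q :=
      N.card_le_card_group.lt_of_ne fun h => hN ((Subgroup.card_eq_iff_eq_top N).mp h)
    rwa [hn, hm, Nat.pow_lt_pow_iff_right hp.one_lt] at hlt
  obtain ⟨K, hK, hNK⟩ := Sylow.exists_subgroup_card_pow_prime_le p
    (hn ▸ pow_dvd_pow p (n.sub_le 1)) N hm (Nat.le_sub_one_of_lt hmn)
  have hindex : K.index = p := by
    have h := K.card_mul_index
    rw [hK, hn, ← Nat.sub_add_cancel (show 1 ≤ n by omega), pow_succ, Nat.add_sub_cancel] at h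
    exact Nat.eq_of_mul_eq_mul_left (pow_pos hp.pos _) h
  refine ⟨K, Subgroup.normal_of_index_eq_minFac_card ?_, hNK, hindex⟩
  rw [hindex, hn, hp.pow_minFac (by omega)]

theorem Submodule.exists_finset_card_le_finrank_of_forall_eq_zero {K X : Type*} [Field K]
    (V : Submodule K (X → K)) [FiniteDimensional K V] :
    ∃ T : Finset X, T.card ≤ finrank K V ∧ ∀ φ ∈ V, (∀ x ∈ T, φ x = 0) → φ = 0 := by
  classical
  induction hn : finrank K V using Nat.strong_induction_on generalizing V with
  | _ n ih =>
  by_cases hV : V = ⊥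
  · exact ⟨∅, by simp, fun φ hφ _ => by simpa [hV] using hφ⟩
  obtain ⟨φ₀, hφ₀, hφ₀ne⟩ := Submodule.exists_mem_ne_zero_of_ne_bot hV
  obtain ⟨x₀, hx₀⟩ := Function.ne_iff.mp hφ₀ne
  let V' := V ⊓ LinearMap.ker (LinearMap.proj x₀ : (X → K) →ₗ[K] K)
  have hlt : finrank K V' < n := hn ▸ Submodule.finrank_lt_finrank_of_lt
    (inf_le_left.lt_of_ne fun h => hx₀ (h.ge hφ₀).2)
  obtain ⟨T, hT, hTV'⟩ := ih _ hlt V' rfl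
  refine ⟨insert x₀ T, (Finset.card_insert_le _ _).trans (by omega), fun φ hφ hφT => ?_⟩
  exact hTV' φ ⟨hφ, hφT x₀ (Finset.mem_insert_self _ _)⟩ fun x hx =>
    hφT x (Finset.mem_insert_of_mem hx)

theorem LinearMap.finrank_le_finrank_of_ker_le_range {K V W : Type*} [Field K] [AddCommGroup V]
    [Module K V] [AddCommGroup W] [Module K W] [FiniteDimensional K V] [FiniteDimensional K W]
    (L : V →ₗ[K] W) (δ : W →ₗ[K] K) (hδL : ker δ ≤ range L) (hL : ker L ≠ ⊥) :
    finrank K W ≤ finrank K V := by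
  have hδ := δ.finrank_range_add_finrank_ker
  have hrank := L.finrank_range_add_finrank_ker
  have hrangeδ : finrank K (range δ) ≤ 1 := (Submodule.finrank_le _).trans (finrank_self K).le
  have hker := Submodule.finrank_mono hδL
  have hkerL : finrank K (ker L) ≠ 0 := fun h => hL (Submodule.finrank_eq_zero.mp h)
  omega

theorem Subgroup.topologicalClosure_closure_singleton_subtype_eq_top {H : Type*} [Group H]
    [TopologicalSpace H] [IsTopologicalGroup H] {A : Subgroup H} {a : H}
    (hA : A = (closure {a}).topologicalClosure) (ha : a ∈ A) :
    (closure {(⟨a, ha⟩ : A)}).topologicalClosure = ⊤ := by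
  refine eq_top_iff.mpr fun x _ => ?_
  have himage : ((↑) : A → H) '' closure {(⟨a, ha⟩ : A)} = closure {a} := by
    rw [← A.coe_subtype, ← coe_map, MonoidHom.map_closure, Set.image_singleton]
    rfl
  rw [← SetLike.mem_coe, topologicalClosure_coe,
    Topology.IsInducing.subtypeVal.closure_eq_preimage_closure_image, Set.mem_preimage]
  have hx : (x : H) ∈ ((closure {a}).topologicalClosure : Set H) := hA ▸ x.2
  rwa [topologicalClosure_coe, ← himage] at hx

theorem isProP_of_finite {p : ℕ} [Fact p.Prime] {P : Type*} [Group P] [TopologicalSpace P]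
    [IsTopologicalGroup P] [Finite P] [DiscreteTopology P] (hP : IsPGroup p P) : IsProP p P :=
  ⟨Finite.compactSpace, inferInstance, fun U _ _ => hP.index U⟩

theorem IsProP.exists_le_normal_index_eq_of_isOpen {p : ℕ} [Fact p.Prime] {G : Type*} [Group G]
    [TopologicalSpace G] [IsTopologicalGroup G] (hG : IsProP p G) {O : Subgroup G}
    (hO : IsOpen (O : Set G)) (hOtop : O ≠ ⊤) :
    ∃ L : Subgroup G, L.Normal ∧ IsOpen (L : Set G) ∧ O ≤ L ∧ L.index = p := by
  obtain ⟨_, _, hindex⟩ := hG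
  obtain ⟨U, hUO⟩ := ProfiniteGrp.exist_openNormalSubgroup_sub_open_nhds_of_one hO O.one_mem
  obtain ⟨n, hn⟩ := hindex U.toSubgroup inferInstance U.isOpen'
  have : U.FiniteIndex := ⟨by simp [hn, (Fact.out : p.Prime).ne_zero]⟩
  have hker : (QuotientGroup.mk' U.toSubgroup).ker ≤ O := (QuotientGroup.ker_mk' _).trans_le hUO
  obtain ⟨K, hK, hOK, hKp⟩ := (IsPGroup.of_card hn).exists_le_normal_index_eq_of_ne_top
    (N := O.map (QuotientGroup.mk' _))
    fun h => hOtop (by rw [← Subgroup.comap_map_eq_self hker, h, Subgroup.comap_top])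
  refine ⟨K.comap (QuotientGroup.mk' _), inferInstance,
    Subgroup.isOpen_mono ((QuotientGroup.ker_mk' _).symm.trans_le (MonoidHom.ker_le_comap _ _))
      U.isOpen', Subgroup.map_le_iff_le_comap.mp hOK, ?_⟩
  rw [Subgroup.index_comap_of_surjective _ (QuotientGroup.mk'_surjective _), hKp]

theorem dmin_le_card {G : Type*} [Group G] [TopologicalSpace G] [IsTopologicalGroup G]
    {S : Finset G} (hS : (Subgroup.closure (S : Set G)).topologicalClosure = ⊤) :
    dmin G ≤ S.card :=
  Nat.sInf_le ⟨S, rfl, hS⟩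

theorem exists_card_eq_dmin {G : Type*} [Group G] [TopologicalSpace G] [IsTopologicalGroup G]
    (hG : TopFG G) :
    ∃ S : Finset G, S.card = dmin G ∧ (Subgroup.closure (S : Set G)).topologicalClosure = ⊤ := by
  obtain ⟨S, hS⟩ := hG
  exact Nat.sInf_mem (s := {n | ∃ S : Finset G, S.card = n ∧ _}) ⟨S.card, S, rfl, hS⟩

theorem topFG_of_closure_range_union_singleton {H G : Type*} [Group H] [TopologicalSpace H]
    [IsTopologicalGroup H] [Group G] [TopologicalSpace G] [IsTopologicalGroup G] (hH : TopFG H)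
    {ι : H →* G} (hι : Continuous ι) {t : G}
    (hgen : (Subgroup.closure (Set.range ι ∪ {t})).topologicalClosure = ⊤) : TopFG G := by
  classical
  obtain ⟨S, hS⟩ := hH
  refine ⟨insert t (S.image ι), ?_⟩
  set C := (Subgroup.closure ((insert t (S.image ι) : Finset G) : Set G)).topologicalClosure
  have hC : IsClosed (C : Set G) := Subgroup.isClosed_topologicalClosure _
  have hιC : (Subgroup.closure (S : Set H)).topologicalClosure ≤ C.comap ι :=
    Subgroup.topologicalClosure_minimal _ ((Subgroup.closure_le _).mpr fun s hs =>
      Subgroup.le_topologicalClosure _ (Subgroup.subset_closure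
        (Finset.mem_insert_of_mem (Finset.mem_image_of_mem ι hs))))
      (hC.preimage hι)
  refine eq_top_iff.mpr <|
    hgen ▸ Subgroup.topologicalClosure_minimal _ ((Subgroup.closure_le _).mpr ?_) hC
  rintro _ (⟨h, rfl⟩ | rfl)
  · exact hιC (hS ▸ Subgroup.mem_top h)
  · exact Subgroup.le_topologicalClosure _ (Subgroup.subset_closure (by simp))

/-- `H¹(G, 𝔽_p)`, realised as the continuous homomorphisms `G → ℤ/p`. -/
def contChar (p : ℕ) (G : Type*) [Group G] [TopologicalSpace G] :
    Submodule (ZMod p) (G → ZMod p) where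
  carrier := {φ | (∀ x y, φ (x * y) = φ x + φ y) ∧ Continuous φ}
  zero_mem' := ⟨fun _ _ => (add_zero 0).symm, continuous_const⟩
  add_mem' := fun ⟨hφ, hφc⟩ ⟨hψ, hψc⟩ =>
    ⟨fun x y => by simp only [Pi.add_apply, hφ, hψ]; abel, hφc.add hψc⟩
  smul_mem' := fun c _ ⟨hφ, hφc⟩ => ⟨fun x y => by simp [hφ, mul_add], hφc.const_smul c⟩

namespace contChar

variable {p : ℕ} {G H : Type*} [Group G] [TopologicalSpace G] [Group H] [TopologicalSpace H]

def toMonoidHom {φ : G → ZMod p} (hφ : φ ∈ contChar p G) : G →* Multiplicative (ZMod p) :=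
  MonoidHom.mk' (fun x => .ofAdd (φ x)) hφ.1

@[simp]
theorem toMonoidHom_apply {φ : G → ZMod p} (hφ : φ ∈ contChar p G) (x : G) :
    toMonoidHom hφ x = .ofAdd (φ x) :=
  rfl

theorem mem_of_monoidHom (χ : G →* Multiplicative (ZMod p)) (hχ : Continuous χ) :
    (fun x => (χ x).toAdd) ∈ contChar p G :=
  ⟨fun x y => by simp, continuous_toAdd.comp hχ⟩

theorem eq_zero_of_forall_mem [IsTopologicalGroup G] {φ : G → ZMod p} (hφ : φ ∈ contChar p G)
    {S : Set G} (hS : (Subgroup.closure S).topologicalClosure = ⊤) (hφS : ∀ s ∈ S, φ s = 0) :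
    φ = 0 := by
  have hker : (Subgroup.closure S).topologicalClosure ≤ (toMonoidHom hφ).ker :=
    Subgroup.topologicalClosure_minimal _ ((Subgroup.closure_le _).mpr fun s hs => hφS s hs)
      (isClosed_singleton.preimage hφ.2)
  rw [hS] at hker
  exact funext fun x => hker (Subgroup.mem_top x)

theorem eq_of_apply_eq [IsTopologicalGroup G] {φ ψ : G → ZMod p} (hφ : φ ∈ contChar p G)
    (hψ : ψ ∈ contChar p G) {g : G} (hg : (Subgroup.closure {g}).topologicalClosure = ⊤)
    (hφψ : φ g = ψ g) : φ = ψ :=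
  sub_eq_zero.mp <| eq_zero_of_forall_mem (sub_mem hφ hψ) hg <| by simpa [sub_eq_zero] using hφψ

theorem exists_eq_zero_iff_mem_of_index_eq [IsTopologicalGroup G] [Fact p.Prime] {K : Subgroup G}
    [K.Normal] (hK : IsOpen (K : Set G)) (hKp : K.index = p) :
    ∃ φ ∈ contChar p G, ∀ x, φ x = 0 ↔ x ∈ K := by
  have : DiscreteTopology (G ⧸ K) := QuotientGroup.discreteTopology hK
  let e : G ⧸ K ≃* Multiplicative (ZMod p) := mulEquivOfPrimeCardEq hKp (by simp)
  refine ⟨_, mem_of_monoidHom (e.toMonoidHom.comp (QuotientGroup.mk' K))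
    ((continuous_of_discreteTopology (f := ⇑e)).comp continuous_quot_mk), fun x => ?_⟩
  simp [← QuotientGroup.eq_one_iff]

def comap (ι : H →* G) (hι : Continuous ι) : contChar p G →ₗ[ZMod p] contChar p H where
  toFun φ := ⟨φ.1 ∘ ι, fun x y => by simp [φ.2.1], φ.2.2.comp hι⟩
  map_add' _ _ := rfl
  map_smul' _ _ := rfl

theorem exists_ne_zero_forall_mem_eq_zero [IsTopologicalGroup G] [Fact p.Prime]
    (hG : IsProP p G) {M : Subgroup G} (hM : IsClosed (M : Set G)) (hMtop : M ≠ ⊤) :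
    ∃ φ ∈ contChar p G, φ ≠ 0 ∧ ∀ x ∈ M, φ x = 0 := by
  obtain ⟨O, ⟨hO, hMO⟩, hOtop⟩ : ∃ O : Subgroup G, (IsOpen (O : Set G) ∧ M ≤ O) ∧ O ≠ ⊤ := by
    have := hG.1
    have := hG.2.1
    by_contra! h
    exact hMtop <| (ProfiniteGrp.closedSubgroup_eq_sInf_open ⟨M, hM⟩).trans (sInf_eq_top.mpr h)
  obtain ⟨L, _, hL, hOL, hLp⟩ := hG.exists_le_normal_index_eq_of_isOpen hO hOtop
  obtain ⟨φ, hφ, hφL⟩ := exists_eq_zero_iff_mem_of_index_eq hL hLp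
  refine ⟨φ, hφ, fun h0 => ?_, fun x hx => (hφL x).mpr (hOL (hMO hx))⟩
  have hLtop : L = ⊤ := eq_top_iff.mpr fun x _ => (hφL x).mp (by simp [h0])
  exact (Fact.out : p.Prime).one_lt.ne' (hLp ▸ Subgroup.index_eq_one.mpr hLtop)

theorem restrict_injective [IsTopologicalGroup G] {S : Set G}
    (hS : (Subgroup.closure S).topologicalClosure = ⊤) :
    Function.Injective
      (LinearMap.funLeft (ZMod p) (ZMod p) ((↑) : S → G) ∘ₗ (contChar p G).subtype) := by
  rw [← LinearMap.ker_eq_bot, LinearMap.ker_eq_bot']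
  exact fun φ hφ => Subtype.ext <| eq_zero_of_forall_mem φ.2 hS fun s hs => congrFun hφ ⟨s, hs⟩

theorem finite_of_topFG [IsTopologicalGroup G] [Fact p.Prime] (hG : TopFG G) :
    Module.Finite (ZMod p) (contChar p G) :=
  let ⟨_, hS⟩ := hG
  Module.Finite.of_injective _ (restrict_injective hS)

theorem finrank_le_dmin [IsTopologicalGroup G] [Fact p.Prime] (hG : TopFG G) :
    finrank (ZMod p) (contChar p G) ≤ dmin G := by
  obtain ⟨S, hS, hSgen⟩ := exists_card_eq_dmin hG
  simpa [← hS] using LinearMap.finrank_le_finrank_of_injective (restrict_injective (p := p) hSgen)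

theorem dmin_le_finrank [IsTopologicalGroup G] [Fact p.Prime] (hG : IsProP p G)
    [Module.Finite (ZMod p) (contChar p G)] : dmin G ≤ finrank (ZMod p) (contChar p G) := by
  obtain ⟨T, hT, hTsep⟩ := (contChar p G).exists_finset_card_le_finrank_of_forall_eq_zero
  refine (dmin_le_card ?_).trans hT
  by_contra hTtop
  obtain ⟨φ, hφ, hφ0, hφT⟩ := exists_ne_zero_forall_mem_eq_zero hG
    (Subgroup.isClosed_topologicalClosure _) hTtop
  exact hφ0 <| hTsep φ hφ fun x hx =>
    hφT x (Subgroup.le_topologicalClosure _ (Subgroup.subset_closure hx))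

end contChar

section HNN

variable {p : ℕ} [Fact p.Prime] {H G : Type*} [Group H] [TopologicalSpace H] [Group G]
  [TopologicalSpace G] {A : Subgroup H} {f : A →* H} {ι : H →* G} {t : G}

theorem exists_contChar_extension
    (huniv : ∀ (P : Type) [Group P] [TopologicalSpace P] [IsTopologicalGroup P], IsProP p P →
      ∀ (fH : H →* P) (s : P), Continuous fH →
        (∀ x : A, s * fH (x : H) * s⁻¹ = fH (f x)) →
        ∃ F : G →* P, Continuous F ∧ F.comp ι = fH ∧ F t = s)
    {φ : H → ZMod p} (hφ : φ ∈ contChar p H) (hφf : ∀ x : A, φ (f x) = φ x) (c : ZMod p) :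
    ∃ ψ ∈ contChar p G, ψ ∘ ι = φ ∧ ψ t = c := by
  obtain ⟨F, hF, hFι, hFt⟩ := huniv (Multiplicative (ZMod p))
    (isProP_of_finite ZModModule.isPGroup_multiplicative) (contChar.toMonoidHom hφ) (.ofAdd c)
    (continuous_ofAdd.comp hφ.2) fun x => by simp [hφf]
  refine ⟨_, contChar.mem_of_monoidHom F hF, funext fun x => ?_, by simp [hFt]⟩
  simp [← MonoidHom.comp_apply, hFι]

theorem finrank_contChar_le_of_forall_extension [IsTopologicalGroup H]
    [Module.Finite (ZMod p) (contChar p H)] [Module.Finite (ZMod p) (contChar p G)] {a : H}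
    (hA : A = (Subgroup.closure {a}).topologicalClosure) (hf : Continuous f) (hι : Continuous ι)
    (hext : ∀ φ ∈ contChar p H, (∀ x : A, φ (f x) = φ x) →
      ∀ c : ZMod p, ∃ ψ ∈ contChar p G, ψ ∘ ι = φ ∧ ψ t = c) :
    finrank (ZMod p) (contChar p H) ≤ finrank (ZMod p) (contChar p G) := by
  have ha : a ∈ A := hA ▸ Subgroup.le_topologicalClosure _ (Subgroup.subset_closure rfl)
  let δ : contChar p H →ₗ[ZMod p] ZMod p :=
    (LinearMap.proj (R := ZMod p) (φ := fun _ : H => ZMod p) (f ⟨a, ha⟩) - LinearMap.proj a) ∘ₗ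
      (contChar p H).subtype
  refine LinearMap.finrank_le_finrank_of_ker_le_range (contChar.comap ι hι) δ ?_ ?_
  · intro φ hφ
    have hφf := contChar.eq_of_apply_eq (contChar.comap f hf φ).2
      (contChar.comap A.subtype continuous_subtype_val φ).2
      (Subgroup.topologicalClosure_closure_singleton_subtype_eq_top hA ha)
      (sub_eq_zero.mp hφ)
    obtain ⟨ψ, hψ, hψι, -⟩ := hext φ φ.2 (congrFun hφf) 0
    exact ⟨⟨ψ, hψ⟩, Subtype.ext hψι⟩
  · obtain ⟨ψ, hψ, hψι, hψt⟩ := hext 0 (zero_mem _) (fun _ => rfl) 1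
    refine (Submodule.ne_bot_iff _).mpr ⟨⟨ψ, hψ⟩, Subtype.ext hψι, fun h => ?_⟩
    exact one_ne_zero (hψt.symm.trans (congrFun (congrArg Subtype.val h) t))

end HNN

theorem dmin_HNN_ge_general (p : ℕ) (hp : p.Prime)
    (H G : Type) [Group H] [TopologicalSpace H] [IsTopologicalGroup H]
    [Group G] [TopologicalSpace G] [IsTopologicalGroup G]
    (hH : IsProP p H) (hHfg : TopFG H)
    (A : Subgroup H) (a : H)
    -- A is the procyclic subgroup topologically generated by a
    (hA : A = (Subgroup.closure ({a} : Set H)).topologicalClosure)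
    (f : A →* H) (hf : Continuous f ∧ Function.Injective f)
    (ι : H →* G) (hι : Continuous ι ∧ Function.Injective ι)
    (t : G)
    (hgen : (Subgroup.closure (Set.range ⇑ι ∪ {t})).topologicalClosure = ⊤)
    -- universal property of the pro-p HNN-extension
    (huniv : ∀ (P : Type) [Group P] [TopologicalSpace P] [IsTopologicalGroup P], IsProP p P →
      ∀ (fH : H →* P) (s : P), Continuous fH →
        (∀ x : A, s * fH (x : H) * s⁻¹ = fH (f x)) →
        ∃ F : G →* P, Continuous F ∧ F.comp ι = fH ∧ F t = s) :
    dmin H ≤ dmin G := by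
  have : Fact p.Prime := ⟨hp⟩
  have hGfg : TopFG G := topFG_of_closure_range_union_singleton hHfg hι.1 hgen
  have : Module.Finite (ZMod p) (contChar p H) := contChar.finite_of_topFG hHfg
  have : Module.Finite (ZMod p) (contChar p G) := contChar.finite_of_topFG hGfg
  calc dmin H ≤ finrank (ZMod p) (contChar p H) := contChar.dmin_le_finrank hH
    _ ≤ finrank (ZMod p) (contChar p G) :=
      finrank_contChar_le_of_forall_extension hA hf.1 hι.1 fun _ hφ hφf =>
        exists_contChar_extension huniv hφ hφf
    _ ≤ dmin G := contChar.finrank_le_dmin hGfg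

/-- If `G = HNN(H, A, t)` is a pro-p HNN-extension of a finitely generated pro-p group `H`
over a procyclic subgroup `A` with associated monomorphism `f : A → H`, then `d(G) ≥ d(H)`. -/
theorem dmin_HNN_ge (p : ℕ) (hp : p.Prime)
    (H G : Type) [Group H] [TopologicalSpace H] [IsTopologicalGroup H]
    [Group G] [TopologicalSpace G] [IsTopologicalGroup G]
    (hH : IsProP p H) (hG : IsProP p G) (hHfg : TopFG H)
    (A : Subgroup H) (a : H)
    -- A is the procyclic subgroup topologically generated by a
    (hA : A = (Subgroup.closure ({a} : Set H)).topologicalClosure)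
    (f : A →* H) (hf : Continuous f ∧ Function.Injective f)
    (ι : H →* G) (hι : Continuous ι ∧ Function.Injective ι)
    (t : G)
    (hrel : ∀ x : A, t * ι (x : H) * t⁻¹ = ι (f x))
    (hgen : (Subgroup.closure (Set.range ⇑ι ∪ {t})).topologicalClosure = ⊤)
    -- universal property of the pro-p HNN-extension
    (huniv : ∀ (P : Type) [Group P] [TopologicalSpace P] [IsTopologicalGroup P], IsProP p P →
      ∀ (fH : H →* P) (s : P), Continuous fH →
        (∀ x : A, s * fH (x : H) * s⁻¹ = fH (f x)) →
        ∃ F : G →* P, Continuous F ∧ F.comp ι = fH ∧ F t = s) :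
    dmin H ≤ dmin G :=
  dmin_HNN_ge_general p hp H G hH hHfg A a hA f hf ι hι t hgen huniv
end

section
/- Let G be a group satisfying the Greenberg–Stallings property and such that for every finitely generated subgroup H the set R(H) = { K : H ≤ K ≤ G, [K:H] < ∞ } has a maximal element. Then every finitely generated subgroup H of G has a root: R(H) has a greatest element. -/
/-!
Greenberg–Stallings makes the finite-index overgroups of a finitely generated subgroup `H`
closed under joins: two of them are finitely generated and commensurable through `H`, so their
intersection has finite index in their join, and so does `H`. In a join-closed family a maximal
element is the greatest one.
-/

open Subgroup

def GreenbergStallings (G : Type*) [Group G] : Prop :=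
  ∀ A B : Subgroup G, A.FG → B.FG → (A ⊓ B).relIndex A ≠ 0 →
    (A ⊓ B).relIndex B ≠ 0 → (A ⊓ B).relIndex (A ⊔ B) ≠ 0

section

variable {G : Type*} [Group G]

theorem Group.fg_of_finiteIndex_of_fg {H : Subgroup G} [H.FiniteIndex] (hH : H.FG) :
    Group.FG G := by
  obtain ⟨S, rfl⟩ := hH
  have := finite_quotient_of_finiteIndex (H := closure (S : Set G))
  refine Group.fg_iff.mpr ⟨S ∪ Set.range (Quotient.out : G ⧸ closure (S : Set G) → G),
    eq_top_iff.mpr fun g _ => ?_, S.finite_toSet.union (Set.finite_range _)⟩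
  obtain ⟨h, hh⟩ := QuotientGroup.mk_out_eq_mul (closure (S : Set G)) g
  have hg : g = (g : G ⧸ closure (S : Set G)).out * (h : G)⁻¹ := by rw [hh]; group
  rw [hg]
  exact mul_mem (subset_closure (Or.inr ⟨_, rfl⟩))
    (closure_mono Set.subset_union_left (inv_mem h.2))

theorem Subgroup.FG.of_le_of_relIndex_ne_zero {H K : Subgroup G} (hH : H.FG) (hHK : H ≤ K)
    (hrel : H.relIndex K ≠ 0) : K.FG := by
  have : (H.subgroupOf K).FiniteIndex := ⟨hrel⟩
  have hfg : (H.subgroupOf K).FG := by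
    rw [← Group.fg_iff_subgroup_fg] at hH ⊢
    exact Group.fg_of_surjective (f := (subgroupOfEquivOfLe hHK).symm.toMonoidHom)
      (subgroupOfEquivOfLe hHK).symm.surjective
  exact (Group.fg_iff_subgroup_fg K).mp (Group.fg_of_finiteIndex_of_fg hfg)

theorem GreenbergStallings.relIndex_sup_ne_zero (hGS : GreenbergStallings G)
    {H A B : Subgroup G} (hH : H.FG) (hHA : H ≤ A) (hA : H.relIndex A ≠ 0) (hHB : H ≤ B)
    (hB : H.relIndex B ≠ 0) : H.relIndex (A ⊔ B) ≠ 0 := by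
  have hHAB : H ≤ A ⊓ B := le_inf hHA hHB
  have hAB : (A ⊓ B).relIndex (A ⊔ B) ≠ 0 :=
    hGS A B (hH.of_le_of_relIndex_ne_zero hHA hA) (hH.of_le_of_relIndex_ne_zero hHB hB)
      (mt (relIndex_eq_zero_of_le_left hHAB) hA) (mt (relIndex_eq_zero_of_le_left hHAB) hB)
  exact relIndex_ne_zero_trans (mt (relIndex_eq_zero_of_le_right inf_le_left) hA) hAB

end

/-- If `G` satisfies the Greenberg–Stallings property and for every finitely generated
subgroup `H` the set `R(H) = {K | H ≤ K, [K:H] < ∞}` has a maximal element, then every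
finitely generated subgroup of `G` has a root: `R(H)` has a greatest element. -/
theorem root_exists_of_GS_and_maximal {G : Type*} [Group G]
    (hGS : ∀ A B : Subgroup G, A.FG → B.FG → (A ⊓ B).relIndex A ≠ 0 →
      (A ⊓ B).relIndex B ≠ 0 → (A ⊓ B).relIndex (A ⊔ B) ≠ 0)
    (hmax : ∀ H : Subgroup G, H.FG → ∃ N : Subgroup G,
      (H ≤ N ∧ H.relIndex N ≠ 0) ∧
      ∀ K : Subgroup G, (H ≤ K ∧ H.relIndex K ≠ 0) → N ≤ K → N = K) :
    ∀ H : Subgroup G, H.FG → ∃ N : Subgroup G,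
      (H ≤ N ∧ H.relIndex N ≠ 0) ∧
      ∀ K : Subgroup G, H ≤ K → H.relIndex K ≠ 0 → K ≤ N := by
  intro H hH
  obtain ⟨N, ⟨hHN, hN⟩, hNmax⟩ := hmax H hH
  refine ⟨N, ⟨hHN, hN⟩, fun K hHK hK => ?_⟩
  have hsup : H.relIndex (N ⊔ K) ≠ 0 :=
    GreenbergStallings.relIndex_sup_ne_zero hGS hH hHN hN hHK hK
  rw [hNmax (N ⊔ K) ⟨hHN.trans le_sup_left, hsup⟩ le_sup_left]
  exact le_sup_right
end

section
/- Let G be a group in which every finitely generated subgroup has a root, and in which every finitely generated non-abelian subgroup H satisfies [N_G(H) : H] < ∞. Then for every finitely generated non-abelian subgroup H of G, the normalizer tower N⁰ = H, N^{α+1} = N_G(N^α) stabilizes after finitely many steps. -/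
/-!
Every stage `Nᵏ` of the tower contains `H` with finite index: if `Nᵏ` has finite index over `H`,
it is finitely generated and (containing `H`) non-abelian, so it has finite index in its own
normalizer `Nᵏ⁺¹`. Hence every `Nᵏ` lies in the root `R` of `H`, and since `[R : H]` is finite,
the indices `[R : Nᵏ]` form a non-increasing sequence of naturals, which is eventually
constant; equal index in `R` forces equality of nested subgroups.
-/

namespace Subgroup

variable {G : Type*} [Group G]

theorem isMulCommutative_of_le {H K : Subgroup G} (hHK : H ≤ K) [IsMulCommutative K] :
    IsMulCommutative H :=
  le_centralizer_iff_isMulCommutative.mp <|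
    hHK.trans <| (le_centralizer K).trans <| centralizer_le hHK

theorem FG.of_le_of_relIndex_ne_zero_s17 {H K : Subgroup G} (hH : H.FG) (hHK : H ≤ K)
    (hfin : H.relIndex K ≠ 0) : K.FG := by
  have : Finite (K ⧸ H.subgroupOf K) := Nat.finite_of_card_ne_zero hfin
  let reps : Set G := Set.range fun q : K ⧸ H.subgroupOf K => ((q.out : K) : G)
  have hreps : (closure reps).FG :=
    (Subgroup.fg_iff _).mpr ⟨reps, rfl, Set.finite_range _⟩
  suffices K = H ⊔ closure reps from this ▸ hH.sup hreps
  refine le_antisymm (fun k hk => ?_) (sup_le hHK ((closure_le K).mpr ?_))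
  · obtain ⟨h, hout⟩ := QuotientGroup.mk_out_eq_mul (H.subgroupOf K) ⟨k, hk⟩
    have hk' : k = ((Quotient.out (QuotientGroup.mk ⟨k, hk⟩ : K ⧸ H.subgroupOf K) : K) : G) *
        ((h : K) : G)⁻¹ := by
      rw [hout]; simp
    rw [hk']
    exact mul_mem (mem_sup_right (subset_closure ⟨_, rfl⟩)) (mem_sup_left (inv_mem h.2))
  · rintro _ ⟨q, rfl⟩
    exact (q.out : K).2

theorem eq_of_le_of_relIndex_eq {K L R : Subgroup G} (hKL : K ≤ L) (hLR : L ≤ R)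
    (hK : K.relIndex R ≠ 0) (heq : K.relIndex R = L.relIndex R) : K = L := by
  have h := relIndex_mul_relIndex K L R hKL hLR
  rw [← heq, mul_eq_right₀ hK, relIndex_eq_one] at h
  exact le_antisymm hKL h

theorem exists_forall_ge_eq_of_monotone {T : ℕ → Subgroup G} {R : Subgroup G}
    (hT : Monotone T) (hTR : ∀ n, T n ≤ R) (h0 : (T 0).relIndex R ≠ 0) :
    ∃ n, ∀ m, n ≤ m → T n = T m := by
  have hfin : ∀ n, (T n).relIndex R ≠ 0 := fun n =>
    fun h => h0 (relIndex_eq_zero_of_le_left (hT (Nat.zero_le n)) h)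
  have hanti : Antitone fun n => (T n).relIndex R := fun m n hmn =>
    relIndex_le_of_le_left (hT hmn) (hfin m)
  obtain ⟨n, hn⟩ := WellFoundedLT.antitone_chain_condition hanti
  exact ⟨n, fun m hm => eq_of_le_of_relIndex_eq (hT hm) (hTR m) (hfin n) (hn m hm)⟩

def normalizerTower (H : Subgroup G) (n : ℕ) : Subgroup G :=
  (fun K : Subgroup G => normalizer (K : Set G))^[n] H

@[simp]
theorem normalizerTower_zero (H : Subgroup G) : H.normalizerTower 0 = H :=
  rfl

theorem normalizerTower_succ (H : Subgroup G) (n : ℕ) :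
    H.normalizerTower (n + 1) = normalizer (H.normalizerTower n : Set G) :=
  Function.iterate_succ_apply' _ n H

theorem normalizerTower_monotone (H : Subgroup G) : Monotone H.normalizerTower :=
  monotone_nat_of_le_succ fun n => (normalizerTower_succ H n).symm ▸ le_normalizer

theorem le_normalizerTower (H : Subgroup G) (n : ℕ) : H ≤ H.normalizerTower n :=
  normalizerTower_monotone H (Nat.zero_le n)

theorem relIndex_normalizerTower_ne_zero
    (hnorm : ∀ K : Subgroup G, K.FG → ¬IsMulCommutative K →
      K.relIndex (normalizer (K : Set G)) ≠ 0)
    {H : Subgroup G} (hH : H.FG) (hna : ¬IsMulCommutative H) (n : ℕ) :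
    H.relIndex (H.normalizerTower n) ≠ 0 := by
  induction n with
  | zero => simp [relIndex_self]
  | succ n ih =>
    have hle := le_normalizerTower H n
    have hfg : (H.normalizerTower n).FG := hH.of_le_of_relIndex_ne_zero_s17 hle ih
    have hna' : ¬IsMulCommutative (H.normalizerTower n) := fun _ =>
      hna (isMulCommutative_of_le hle)
    rw [normalizerTower_succ]
    exact relIndex_ne_zero_trans ih (hnorm _ hfg hna')

end Subgroup

/-- If in `G` every finitely generated subgroup has a root and every finitely generated
non-abelian subgroup has finite index in its normalizer, then the normalizer tower of any
finitely generated non-abelian subgroup stabilizes after finitely many steps. -/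
theorem normalizer_tower_stabilizes {G : Type*} [Group G]
    (hroot : ∀ H : Subgroup G, H.FG → ∃ R : Subgroup G,
      (H ≤ R ∧ H.relIndex R ≠ 0) ∧
      ∀ K : Subgroup G, H ≤ K → H.relIndex K ≠ 0 → K ≤ R)
    (hnorm : ∀ H : Subgroup G, H.FG → ¬IsMulCommutative H →
      H.relIndex (Subgroup.normalizer (H : Set G)) ≠ 0)
    (H : Subgroup G) (hH : H.FG) (hna : ¬IsMulCommutative H) :
    ∃ n : ℕ, ∀ m : ℕ, n ≤ m →
      (fun K : Subgroup G => Subgroup.normalizer (K : Set G))^[m] H =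
        (fun K : Subgroup G => Subgroup.normalizer (K : Set G))^[n] H := by
  obtain ⟨R, ⟨-, hHR⟩, hroot_max⟩ := hroot H hH
  have hTR (n : ℕ) : H.normalizerTower n ≤ R :=
    hroot_max _ (H.le_normalizerTower n) (Subgroup.relIndex_normalizerTower_ne_zero hnorm hH hna n)
  obtain ⟨n, hn⟩ :=
    Subgroup.exists_forall_ge_eq_of_monotone H.normalizerTower_monotone hTR hHR
  exact ⟨n, fun m hm => (hn m hm).symm⟩
end
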